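/- arXiv:2506.16230 — 3 statements merged into one kernel-verified Lean document; each statement's English description precedes it below -/
import Mathlib

section
/- Fix β ∈ (0,1) and let ρ_{1−β} be the tail-weighted risk measure associated with a weight function w. Let P and R be probability measures on ℝ that place no atom at their (1−β)-quantiles, so that P((v_{1−β}(P),∞)) = β and R((v_{1−β}(R),∞)) = β. If the β-tail conditional distributions of P and R coincide, i.e. P({z : z ≤ x} | {z : z > v_{1−β}(P)}) = R({z : z ≤ x} | {z : z > v_{1−β}(R)}) for every x ∈ ℝ, then ρ_{1−β}(P) = ρ_{1−β}(R). -/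
open MeasureTheory Filter Set
open scoped ENNReal NNReal Topology Classical

noncomputable section

/-- `f` is regularly varying at infinity with index `ρ`:
`f (t*x) / f t → x ^ ρ` as `t → ∞` for every `x > 0`.  Slowly varying means index `0`. -/
def RegVary (f : ℝ → ℝ) (ρ : ℝ) : Prop :=
  ∀ x : ℝ, 0 < x → Tendsto (fun t : ℝ => f (t * x) / f t) atTop (𝓝 (x ^ ρ))

/-- Value-at-Risk at level `1 - s`: `v_{1-s}(P) = inf {u | P((u,∞)) ≤ s}`. -/
def VaR (P : Measure ℝ) (s : ℝ) : ℝ :=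
  sInf {u : ℝ | P (Ioi u) ≤ ENNReal.ofReal s}

/-- `w` is a weight function with tail parameters `κ` and slowly varying `ℓ`:
nonnegative on `(0,1]`, integrates to one, and `w(t) ~ t^κ ℓ(1/t)` as `t → 0⁺`. -/
structure IsWeight (w : ℝ → ℝ) (κ : ℝ) (ℓ : ℝ → ℝ) : Prop where
  nonneg : ∀ t ∈ Ioc (0:ℝ) 1, 0 ≤ w t
  total : (∫ t in Ioc (0:ℝ) 1, w t) = 1
  kappa_gt : -1 < κ
  slow : RegVary ℓ 0
  asym : Tendsto (fun t : ℝ => w t / (t ^ κ * ℓ (1 / t))) (𝓝[>] (0:ℝ)) (𝓝 1)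

/-- Tail-weighted risk measure `ρ_{1-β}(P) = ∫₀¹ w(t) v_{1-βt}(P) dt`, `[0,∞]`-valued. -/
def tailRisk (w : ℝ → ℝ) (β : ℝ) (P : Measure ℝ) : ℝ≥0∞ :=
  ∫⁻ t in Ioc (0:ℝ) 1, ENNReal.ofReal (w t * VaR P (β * t))

/-- Worst-case risk over a set of measures. -/
def worstRisk (w : ℝ → ℝ) (β : ℝ) (S : Set (Measure ℝ)) : ℝ≥0∞ :=
  ⨆ P ∈ S, tailRisk w β P

/-- Worst-case Value-at-Risk over a set of measures. -/
def worstVaR (S : Set (Measure ℝ)) (s : ℝ) : ℝ :=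
  ⨆ P ∈ S, VaR P s

/-- Survival function `F̄_P(x) = P((x,∞))`. -/
def survival (P : Measure ℝ) (x : ℝ) : ℝ := (P (Ioi x)).toReal

/-- `P` is heavy-tailed with index `γ`: its survival function is `RV(-γ)`. -/
def HeavyTailed (P : Measure ℝ) (γ : ℝ) : Prop := RegVary (survival P) (-γ)

/-- Cumulative hazard `Λ_P(x) = - log P((x,∞))`. -/
def hazard (P : Measure ℝ) (x : ℝ) : ℝ := - Real.log (survival P x)

/-- `P` has Weibull-type tails with index `γ`: its cumulative hazard is `RV(γ)`. -/
def WeibullTailed (P : Measure ℝ) (γ : ℝ) : Prop := RegVary (hazard P) γ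

/-- Couplings of two measures on `ℝ`. -/
def Couplings (P R : Measure ℝ) : Set (Measure (ℝ × ℝ)) :=
  {π | π.map Prod.fst = P ∧ π.map Prod.snd = R}

/-- `p`-Wasserstein distance. -/
def Wdist (p : ℝ) (P R : Measure ℝ) : ℝ≥0∞ :=
  (⨅ π ∈ Couplings P R, ∫⁻ z : ℝ × ℝ, ENNReal.ofReal (|z.1 - z.2| ^ p) ∂π) ^ (1 / p)

/-- Wasserstein ball of radius `δ` around `P₀`. -/
def WBall (p δ : ℝ) (P₀ : Measure ℝ) : Set (Measure ℝ) :=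
  {P | IsProbabilityMeasure P ∧ Wdist p P P₀ ≤ ENNReal.ofReal δ}

/-- `φ`-divergence `D_φ(P,R)`, equal to `+∞` unless `P ≪ R`. -/
def phiDiv {α : Type*} [MeasurableSpace α] (φ : ℝ → ℝ) (P R : Measure α) : ℝ≥0∞ :=
  if P ≪ R then lintegral R (fun x => ENNReal.ofReal (φ (P.rnDeriv R x).toReal)) else ⊤

/-- `φ`-divergence ball of radius `δ` around `R`. -/
def phiBall {α : Type*} [MeasurableSpace α] (φ : ℝ → ℝ) (δ : ℝ) (R : Measure α) :
    Set (Measure α) :=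
  {P | IsProbabilityMeasure P ∧ phiDiv φ P R ≤ ENNReal.ofReal δ}

/-- The smoothness assumption on `φ`: twice differentiable, convex,
`φ(1) = φ'(1) = 0`, and `φ(x)/x → ∞`. -/
structure PhiSmooth (φ : ℝ → ℝ) : Prop where
  nonneg : ∀ x : ℝ, 0 ≤ x → 0 ≤ φ x
  diff1 : Differentiable ℝ φ
  diff2 : Differentiable ℝ (deriv φ)
  convex : ConvexOn ℝ (Ici 0) φ
  at_one : φ 1 = 0
  deriv_one : deriv φ 1 = 0
  superlinear : Tendsto (fun x : ℝ => φ x / x) atTop atTop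

/-- Conditional Value-at-Risk `C_{1-β}(P) = β⁻¹ ∫₀^β v_{1-s}(P) ds`. -/
def CVaR (β : ℝ) (P : Measure ℝ) : ℝ := β⁻¹ * ∫ s in Ioc (0:ℝ) β, VaR P s

/-! Below the level `β`, the condition `P((u,∞)) ≤ s` defining `v_{1-s}(P)` only involves the
tail of `P` beyond `v = v_{1-β}(P)`: since `P((v,∞)) = β > s`, it forces `u ≥ v`, and then it
reads `β ≤ s + P((v,u])`. Hence equal tail conditional distributions give `v_{1-s}(P) = v_{1-s}(R)`
for all `s < β`, i.e. the integrands defining `ρ_{1-β}` agree for `t < 1`. -/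

theorem measure_Ioi_le_iff_le_add_measure_Ioc {Q : Measure ℝ} {v : ℝ} {a : ℝ≥0∞}
    (hv : Q (Ioi v) ≠ ∞) (ha : a < Q (Ioi v)) (u : ℝ) :
    Q (Ioi u) ≤ a ↔ Q (Ioi v) ≤ a + Q (Ioc v u) := by
  rcases le_or_gt v u with hvu | huv
  · have hsplit : Q (Ioi v) = Q (Ioc v u) + Q (Ioi u) := by
      rw [← measure_union (Ioc_disjoint_Ioi le_rfl) measurableSet_Ioi,
        Ioc_union_Ioi_eq_Ioi hvu]
    have hfin : Q (Ioc v u) ≠ ∞ := ne_top_of_le_ne_top hv (measure_mono Ioc_subset_Ioi_self)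
    rw [hsplit, add_comm a, ENNReal.add_le_add_iff_left hfin]
  · have hmono : Q (Ioi v) ≤ Q (Ioi u) := measure_mono (Ioi_subset_Ioi huv.le)
    rw [Ioc_eq_empty (not_lt.2 huv.le), measure_empty, add_zero]
    exact iff_of_false (fun h => ha.not_ge (hmono.trans h)) ha.not_ge

theorem VaR_eq_of_measure_Ioc_eq {P R : Measure ℝ} {vP vR s : ℝ}
    (hmass : P (Ioi vP) = R (Ioi vR)) (hfin : P (Ioi vP) ≠ ∞)
    (htail : ∀ u, P (Ioc vP u) = R (Ioc vR u)) (hs : ENNReal.ofReal s < P (Ioi vP)) :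
    VaR P s = VaR R s := by
  unfold VaR
  congr 1
  ext u
  rw [mem_ofPred_eq, mem_ofPred_eq, measure_Ioi_le_iff_le_add_measure_Ioc hfin hs u,
    measure_Ioi_le_iff_le_add_measure_Ioc (hmass ▸ hfin) (hmass ▸ hs) u, hmass, htail]

theorem tailRisk_eq_of_tail_cond_eq_general
    (w : ℝ → ℝ)
    (β : ℝ) (hβ : β ∈ Ioo (0:ℝ) 1)
    (P R : Measure ℝ)
    (hPmass : P (Ioi (VaR P β)) = ENNReal.ofReal β)
    (hRmass : R (Ioi (VaR R β)) = ENNReal.ofReal β)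
    (htail : ∀ x : ℝ,
      P (Iic x ∩ Ioi (VaR P β)) / P (Ioi (VaR P β)) =
        R (Iic x ∩ Ioi (VaR R β)) / R (Ioi (VaR R β))) :
    tailRisk w β P = tailRisk w β R := by
  have hβ0 : ENNReal.ofReal β ≠ 0 := ENNReal.ofReal_ne_zero_iff.2 hβ.1
  have hIoc : ∀ u, P (Ioc (VaR P β) u) = R (Ioc (VaR R β) u) := fun u => by
    have h := htail u
    rwa [hPmass, hRmass, ENNReal.div_eq_div_iff hβ0 ENNReal.ofReal_ne_top hβ0
      ENNReal.ofReal_ne_top, ENNReal.mul_right_inj hβ0 ENNReal.ofReal_ne_top,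
      Iic_inter_Ioi, Iic_inter_Ioi] at h
  unfold tailRisk
  rw [← setLIntegral_congr Ioo_ae_eq_Ioc, ← setLIntegral_congr Ioo_ae_eq_Ioc]
  refine setLIntegral_congr_fun measurableSet_Ioo fun t ht => ?_
  have hβt : ENNReal.ofReal (β * t) < P (Ioi (VaR P β)) := by
    rw [hPmass, ENNReal.ofReal_lt_ofReal_iff hβ.1]
    exact mul_lt_of_lt_one_right hβ.1 ht.2
  rw [VaR_eq_of_measure_Ioc_eq (hPmass.trans hRmass.symm) (hPmass ▸ ENNReal.ofReal_ne_top) hIoc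
    hβt]

/-- the tail-weighted risk measure is a β-tail risk measure:
if the β-tail conditional distributions of `P` and `R` coincide, then
`ρ_{1-β}(P) = ρ_{1-β}(R)`. -/
theorem tailRisk_eq_of_tail_cond_eq
    (w : ℝ → ℝ) (κ : ℝ) (ℓ : ℝ → ℝ) (hw : IsWeight w κ ℓ)
    (β : ℝ) (hβ : β ∈ Ioo (0:ℝ) 1)
    (P R : Measure ℝ) [IsProbabilityMeasure P] [IsProbabilityMeasure R]
    (hPatom : P {VaR P β} = 0) (hRatom : R {VaR R β} = 0)
    (hPmass : P (Ioi (VaR P β)) = ENNReal.ofReal β)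
    (hRmass : R (Ioi (VaR R β)) = ENNReal.ofReal β)
    (htail : ∀ x : ℝ,
      P (Iic x ∩ Ioi (VaR P β)) / P (Ioi (VaR P β)) =
        R (Iic x ∩ Ioi (VaR R β)) / R (Ioi (VaR R β))) :
    tailRisk w β P = tailRisk w β R :=
  tailRisk_eq_of_tail_cond_eq_general w β hβ P R hPmass hRmass htail

end
end

section
/- Let ρ_{1−β} be the tail-weighted risk measure associated with a weight function w. Suppose the probability measure P on ℝ has Weibull-type tails with index γ > 0. Then there exists a slowly varying function ℓ₂ such that ρ_{1−β}(P) = (log(1/β))^{1/γ} ℓ₂(log(1/β)) as β → 0; equivalently, the function u ↦ u^{−1/γ} ρ_{1−e^{−u}}(P) is slowly varying at infinity. -/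
open MeasureTheory Filter Set
open scoped ENNReal NNReal Topology Classical

noncomputable section

/-!
With `Λ` the cumulative hazard of `P`, the quantile `V y = v_{1-e^{-y}}(P)` is the generalized
inverse of `Λ`, and inverting `Λ ∈ RV(γ)` gives `V ∈ RV(1/γ)`. Substituting `β = e^{-u}`,
`ρ_{1-e^{-u}}(P) = ∫₀¹ w(t) V(u + log(1/t)) dt`. Regular variation of `V` gives
`V(u+s)/V(u) → 1` and a Potter bound `V(u+s) ≤ C (1+s)^k V(u)`. Since `κ > -1`, near `0` the
weight satisfies `w(t/2) ≤ 2r w(t)` with `r < 1`, so the mass of `w` on the dyadic blocks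
`(2^{-n-1}t₁, 2^{-n}t₁]` decays geometrically and `w(t) (1 + log(1/t))^k` is integrable.
Dominated convergence then gives `ρ_{1-e^{-u}}(P) ~ V(u)`, which is `RV(1/γ)`.
-/

open Real Asymptotics

namespace RegVary

variable {f g : ℝ → ℝ} {ρ : ℝ}

theorem eventually_ne_zero (hf : RegVary f ρ) : ∀ᶠ t in atTop, f t ≠ 0 := by
  have h := hf 1 one_pos
  simp only [mul_one, Real.one_rpow] at h
  filter_upwards [h.eventually_ne one_ne_zero] with t ht h0
  simp [h0] at ht

theorem of_isEquivalent (hf : RegVary f ρ) (hgf : g ~[atTop] f) : RegVary g ρ := fun x hx =>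
  ((hgf.comp_tendsto (tendsto_id.atTop_mul_const hx)).div hgf).tendsto_nhds_iff.2 (hf x hx)

theorem rpow_mul (hf : RegVary f ρ) (σ : ℝ) : RegVary (fun u => u ^ σ * f u) (σ + ρ) := by
  intro x hx
  rw [Real.rpow_add hx]
  refine ((hf x hx).const_mul (x ^ σ)).congr' ?_
  filter_upwards [eventually_gt_atTop 0] with t ht
  rw [Real.mul_rpow ht.le hx.le, mul_div_mul_comm, mul_div_cancel_left₀ _ (by positivity)]

theorem tendsto_atTop_of_monotone (hf : RegVary f ρ) (hρ : 0 < ρ) (hmono : Monotone f)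
    (hnonneg : 0 ≤ f) : Tendsto f atTop atTop := by
  refine tendsto_atTop_atTop_of_monotone hmono fun M => ?_
  by_contra! hbdd
  have hbdd' : BddAbove (range f) := ⟨M, by rintro _ ⟨t, rfl⟩; exact (hbdd t).le⟩
  have hlim := tendsto_atTop_ciSup hmono hbdd'
  obtain ⟨t, ht⟩ := hf.eventually_ne_zero.exists
  have hL : 0 < ⨆ t, f t := ((hnonneg t).lt_of_ne' ht).trans_le (le_ciSup hbdd' t)
  have h1 := (hlim.comp (tendsto_id.atTop_mul_const two_pos)).div hlim hL.ne'
  rw [div_self hL.ne'] at h1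
  have := tendsto_nhds_unique (hf 2 two_pos) h1
  exact (Real.one_lt_rpow one_lt_two hρ).ne' this

theorem tendsto_comp_mul_div_comp_mul (hf : RegVary f ρ) {h : ℝ → ℝ} (hh : Tendsto h atTop atTop)
    {a c : ℝ} (ha : 0 < a) (hc : 0 < c) :
    Tendsto (fun y => f (h y * c) / f (h y * a)) atTop (𝓝 ((c / a) ^ ρ)) := by
  refine ((hf (c / a) (div_pos hc ha)).comp (hh.atTop_mul_const ha)).congr fun y => ?_
  simp only [Function.comp_apply]
  rw [mul_assoc, mul_div_cancel₀ _ ha.ne']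

end RegVary

def genInv (Λ : ℝ → ℝ) (y : ℝ) : ℝ := sInf {u | y ≤ Λ u}

section genInv

variable {Λ : ℝ → ℝ} {u v y : ℝ}

theorem le_genInv_of_lt (hΛ : Monotone Λ) (hΛ_top : Tendsto Λ atTop atTop) (h : Λ v < y) :
    v ≤ genInv Λ y :=
  le_csInf (hΛ_top.eventually_ge_atTop y).exists fun _ hu => (hΛ.reflect_lt (h.trans_le hu)).le

theorem genInv_le_of_le (hΛ : Monotone Λ) (hv : Λ v < y) (h : y ≤ Λ u) : genInv Λ y ≤ u :=
  csInf_le ⟨v, fun _ hu => (hΛ.reflect_lt (hv.trans_le hu)).le⟩ h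

theorem le_of_genInv_lt (hΛ : Monotone Λ) (hΛ_top : Tendsto Λ atTop atTop) (h : genInv Λ y < u) :
    y ≤ Λ u := by
  obtain ⟨u', hu', hu'u⟩ := exists_lt_of_csInf_lt (hΛ_top.eventually_ge_atTop y).exists h
  exact le_trans hu' (hΛ hu'u.le)

theorem lt_of_lt_genInv (hΛ : Monotone Λ) (hv : Λ v < y) (h : u < genInv Λ y) : Λ u < y :=
  lt_of_not_ge fun h' => (genInv_le_of_le hΛ hv h').not_gt h

theorem monotoneOn_genInv (hΛ : Monotone Λ) (hΛ_top : Tendsto Λ atTop atTop) (hv : Λ v < y) :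
    MonotoneOn (genInv Λ) (Ici y) := fun _ hy _ _ hyy' =>
  csInf_le_csInf ⟨v, fun _ hu => (hΛ.reflect_lt ((hv.trans_le hy).trans_le hu)).le⟩
    (hΛ_top.eventually_ge_atTop _).exists fun _ hu => hyy'.trans hu

theorem tendsto_genInv_atTop (hΛ : Monotone Λ) (hΛ_top : Tendsto Λ atTop atTop) :
    Tendsto (genInv Λ) atTop atTop :=
  tendsto_atTop.2 fun M => (eventually_gt_atTop (Λ M)).mono fun _ => le_genInv_of_lt hΛ hΛ_top

variable {γ x : ℝ}

theorem eventually_genInv_mul_le (hΛ : Monotone Λ) (hΛ_top : Tendsto Λ atTop atTop)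
    (hrv : RegVary Λ γ) (hγ : 0 < γ) (hx : 0 < x) {c : ℝ} (hc : x ^ γ⁻¹ < c) :
    ∀ᶠ y in atTop, genInv Λ (y * x) ≤ genInv Λ y * c := by
  obtain ⟨d, hxd, hdc⟩ := exists_between hc
  have hd : 0 < d := (Real.rpow_pos_of_pos hx _).trans hxd
  have hc0 : 0 < c := hd.trans hdc
  have hxd' : x < d ^ γ := by
    simpa [Real.rpow_inv_rpow hx.le hγ.ne'] using Real.rpow_lt_rpow (by positivity) hxd hγ
  have hV := tendsto_genInv_atTop hΛ hΛ_top
  have hratio := hrv.tendsto_comp_mul_div_comp_mul hV (div_pos hc0 hd) hc0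
  rw [div_div_cancel₀ hc0.ne'] at hratio
  -- `y ≤ Λ (V y * (c/d))` and `Λ (V y * c) / Λ (V y * (c/d)) → d^γ > x` give `x y ≤ Λ (V y * c)`
  filter_upwards [hratio.eventually (eventually_gt_nhds hxd'), hV.eventually_gt_atTop 0,
    (tendsto_id.atTop_mul_const hx).eventually_gt_atTop (Λ 0), eventually_gt_atTop 0]
    with y hy hVy hyx hy0
  have hlow : y ≤ Λ (genInv Λ y * (c / d)) :=
    le_of_genInv_lt hΛ hΛ_top (lt_mul_of_one_lt_right hVy ((one_lt_div hd).2 hdc))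
  refine genInv_le_of_le hΛ hyx ?_
  have := (lt_div_iff₀ (hy0.trans_le hlow)).1 hy
  nlinarith

theorem eventually_mul_le_genInv (hΛ : Monotone Λ) (hΛ_top : Tendsto Λ atTop atTop)
    (hrv : RegVary Λ γ) (hγ : 0 < γ) (hx : 0 < x) {c : ℝ} (hc0 : 0 < c) (hc : c < x ^ γ⁻¹) :
    ∀ᶠ y in atTop, genInv Λ y * c ≤ genInv Λ (y * x) := by
  obtain ⟨d, hcd, hdx⟩ := exists_between hc
  have hd : 0 < d := hc0.trans hcd
  have hdx' : d ^ γ < x := by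
    simpa [Real.rpow_inv_rpow hx.le hγ.ne'] using Real.rpow_lt_rpow hd.le hdx hγ
  have hV := tendsto_genInv_atTop hΛ hΛ_top
  have hratio := hrv.tendsto_comp_mul_div_comp_mul hV (div_pos hc0 hd) hc0
  rw [div_div_cancel₀ hc0.ne'] at hratio
  filter_upwards [hratio.eventually (eventually_lt_nhds hdx'), hV.eventually_gt_atTop 0,
    (hΛ_top.comp (hV.atTop_mul_const (div_pos hc0 hd))).eventually_gt_atTop 0,
    eventually_gt_atTop (Λ 0)] with y hy hVy hΛpos hy0
  simp only [Function.comp_apply] at hΛpos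
  have hup : Λ (genInv Λ y * (c / d)) < y :=
    lt_of_lt_genInv hΛ hy0 (mul_lt_of_lt_one_right hVy ((div_lt_one hd).2 hcd))
  refine le_genInv_of_lt hΛ hΛ_top ?_
  have := (div_lt_iff₀ hΛpos).1 hy
  nlinarith

theorem RegVary.genInv (hΛ : Monotone Λ) (hΛ_top : Tendsto Λ atTop atTop) (hrv : RegVary Λ γ)
    (hγ : 0 < γ) : RegVary (genInv Λ) γ⁻¹ := by
  intro x hx
  have hV := tendsto_genInv_atTop hΛ hΛ_top
  refine tendsto_order.2 ⟨fun a ha => ?_, fun b hb => ?_⟩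
  · obtain ⟨c, hac, hcx⟩ := exists_between (max_lt ha (Real.rpow_pos_of_pos hx γ⁻¹))
    filter_upwards [eventually_mul_le_genInv hΛ hΛ_top hrv hγ hx
      ((le_max_right _ _).trans_lt hac) hcx, hV.eventually_gt_atTop 0] with y hy hVy
    exact ((le_max_left _ _).trans_lt hac).trans_le ((le_div_iff₀ hVy).2 (by linarith))
  · obtain ⟨c, hxc, hcb⟩ := exists_between hb
    filter_upwards [eventually_genInv_mul_le hΛ hΛ_top hrv hγ hx hxc, hV.eventually_gt_atTop 0]
      with y hy hVy
    exact ((div_le_iff₀ hVy).2 (by linarith)).trans_lt hcb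

end genInv

namespace RegVary

variable {V : ℝ → ℝ} {y₀ ρ : ℝ}

theorem tendsto_comp_add_div (hV : RegVary V ρ) (hmono : MonotoneOn V (Ici y₀))
    (hpos : ∀ y ∈ Ici y₀, 0 < V y) {s : ℝ} (hs : 0 ≤ s) :
    Tendsto (fun u => V (u + s) / V u) atTop (𝓝 1) := by
  refine tendsto_order.2 ⟨fun a ha => ?_, fun b hb => ?_⟩
  · filter_upwards [eventually_ge_atTop y₀] with u hu
    exact ha.trans_le ((one_le_div (hpos u hu)).2
      (hmono hu (mem_Ici.2 (hu.trans (le_add_of_nonneg_right hs))) (le_add_of_nonneg_right hs)))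
  · have hnear : ∀ᶠ x in 𝓝[>] 1, x ^ ρ < b := nhdsWithin_le_nhds <|
      (Real.continuousAt_rpow_const 1 ρ (Or.inl one_ne_zero)).eventually
        (eventually_lt_nhds (by simpa using hb))
    obtain ⟨x, hxb, hx1 : 1 < x⟩ := (hnear.and self_mem_nhdsWithin).exists
    filter_upwards [eventually_ge_atTop y₀, eventually_ge_atTop (s / (x - 1)),
      (hV x (by linarith)).eventually (eventually_lt_nhds hxb)] with u hu hus hux
    have hsx : u + s ≤ u * x := by
      have := (div_le_iff₀ (by linarith)).1 hus
      nlinarith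
    calc V (u + s) / V u ≤ V (u * x) / V u := by
          gcongr
          · exact (hpos u hu).le
          · exact hmono (mem_Ici.2 (by linarith)) (mem_Ici.2 (by nlinarith)) hsx
      _ < b := hux

theorem exists_le_mul_one_add_pow (hV : RegVary V ρ) (hmono : MonotoneOn V (Ici y₀))
    (hpos : ∀ y ∈ Ici y₀, 0 < V y) :
    ∃ (C : ℝ) (k : ℕ) (u₀ : ℝ), ∀ u ≥ u₀, ∀ s ≥ 0, V (u + s) ≤ C * (1 + s) ^ k * V u := by
  obtain ⟨k, hk⟩ := exists_nat_gt ρ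
  have h2k : (2:ℝ) ^ ρ < 2 ^ k := by
    rw [← Real.rpow_natCast]; exact Real.rpow_lt_rpow_of_exponent_lt one_lt_two hk
  obtain ⟨u₀, hu₀⟩ := eventually_atTop.1 (((hV 2 two_pos).eventually (eventually_lt_nhds h2k)).and
    ((eventually_ge_atTop y₀).and (eventually_ge_atTop 1)))
  have hdouble : ∀ n : ℕ, ∀ u ≥ u₀, V (u * 2 ^ n) ≤ (2 ^ n) ^ k * V u := by
    intro n
    induction n with
    | zero => intro u _; simp
    | succ n ih =>
      intro u hu
      have hun : u₀ ≤ u * 2 ^ n := hu.trans (le_mul_of_one_le_right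
        (zero_le_one.trans (hu₀ u hu).2.2) (one_le_pow₀ one_le_two))
      obtain ⟨hratio, hy₀, -⟩ := hu₀ _ hun
      rw [div_lt_iff₀ (hpos _ hy₀)] at hratio
      calc V (u * 2 ^ (n + 1)) = V (u * 2 ^ n * 2) := by ring_nf
        _ ≤ 2 ^ k * V (u * 2 ^ n) := hratio.le
        _ ≤ 2 ^ k * ((2 ^ n) ^ k * V u) := by gcongr; exact ih u hu
        _ = (2 ^ (n + 1)) ^ k * V u := by ring
  refine ⟨2 ^ k, k, u₀, fun u hu s hs => ?_⟩
  obtain ⟨-, hu0, hu1⟩ := hu₀ u hu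
  obtain ⟨n, hn₁, hn₂⟩ := exists_nat_pow_near (by linarith : (1:ℝ) ≤ 1 + s) one_lt_two
  calc V (u + s) ≤ V (u * 2 ^ (n + 1)) :=
        hmono (mem_Ici.2 (by linarith)) (mem_Ici.2 (by nlinarith)) (by nlinarith)
    _ ≤ (2 ^ (n + 1)) ^ k * V u := hdouble (n + 1) u hu
    _ ≤ (2 * (1 + s)) ^ k * V u := by
        gcongr
        · exact (hpos u hu0).le
        · rw [pow_succ, mul_comm]; linarith
    _ = 2 ^ k * (1 + s) ^ k * V u := by rw [mul_pow]

end RegVary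

theorem summable_succ_pow_mul_geometric (k : ℕ) {r : ℝ} (hr0 : 0 ≤ r) (hr1 : r < 1) :
    Summable fun n : ℕ => ((n : ℝ) + 1) ^ k * r ^ n := by
  obtain ⟨r', hrr', hr'1⟩ := exists_between hr1
  have hr' : 0 < r' := hr0.trans_lt hrr'
  have hsum := (summable_nat_add_iff 1).2 (summable_pow_mul_geometric_of_norm_lt_one k
    (r := r') (by rw [norm_of_nonneg hr'.le]; exact hr'1))
  refine (hsum.div_const r').of_nonneg_of_le (fun n => by positivity) fun n => ?_
  rw [pow_succ, ← mul_assoc, mul_div_cancel_right₀ _ hr'.ne']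
  push_cast
  gcongr

section weightIntegrability

variable {w : ℝ → ℝ} {r : ℝ}

theorem setIntegral_Ioc_div_two_le {s : ℝ} (hs : 0 < s) (hw : IntegrableOn w (Ioc 0 s))
    (hdouble : ∀ t ∈ Ioc 0 s, w (t / 2) ≤ 2 * r * w t) :
    ∫ t in Ioc 0 (s / 2), w t ≤ r * ∫ t in Ioc 0 s, w t := by
  have hs2 : 0 ≤ s / 2 := by positivity
  have hint : IntervalIntegrable w volume 0 s :=
    (intervalIntegrable_iff_integrableOn_Ioc_of_le hs.le).2 hw
  have hint2 : IntervalIntegrable (fun t => w (t / 2)) volume 0 s := by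
    have := ((intervalIntegrable_iff_integrableOn_Ioc_of_le hs2).2
      (hw.mono_set (Ioc_subset_Ioc_right (by linarith)))).comp_mul_left (c := 2⁻¹)
    simpa [div_eq_inv_mul] using this
  have hmono : ∫ t in 0..s, w (t / 2) ≤ ∫ t in 0..s, 2 * r * w t :=
    intervalIntegral.integral_mono_on_of_le_Ioo hs.le hint2 (hint.const_mul _)
      fun t ht => hdouble t ⟨ht.1, ht.2.le⟩
  rw [intervalIntegral.integral_comp_div _ two_ne_zero, intervalIntegral.integral_const_mul,
    zero_div, intervalIntegral.integral_of_le hs2, intervalIntegral.integral_of_le hs.le,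
    smul_eq_mul] at hmono
  linarith

theorem setIntegral_Ioc_div_two_pow_le {t₁ : ℝ} (ht₁ : 0 < t₁) (hr : 0 ≤ r)
    (hw : IntegrableOn w (Ioc 0 t₁)) (hdouble : ∀ t ∈ Ioc 0 t₁, w (t / 2) ≤ 2 * r * w t)
    (n : ℕ) : ∫ t in Ioc 0 (t₁ / 2 ^ n), w t ≤ r ^ n * ∫ t in Ioc 0 t₁, w t := by
  induction n with
  | zero => simp
  | succ n ih =>
    have hsub : Ioc 0 (t₁ / 2 ^ n) ⊆ Ioc 0 t₁ :=
      Ioc_subset_Ioc_right (div_le_self ht₁.le (one_le_pow₀ one_le_two))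
    calc ∫ t in Ioc 0 (t₁ / 2 ^ (n + 1)), w t = ∫ t in Ioc 0 (t₁ / 2 ^ n / 2), w t := by
          rw [pow_succ, div_div]
      _ ≤ r * ∫ t in Ioc 0 (t₁ / 2 ^ n), w t :=
          setIntegral_Ioc_div_two_le (by positivity) (hw.mono_set hsub)
            fun t ht => hdouble t (hsub ht)
      _ ≤ r * (r ^ n * ∫ t in Ioc 0 t₁, w t) := by gcongr
      _ = r ^ (n + 1) * ∫ t in Ioc 0 t₁, w t := by ring

theorem integrableOn_Ioc_mul_one_sub_log_pow (hw : IntegrableOn w (Ioc 0 1)) {a b : ℝ}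
    (ha : 0 < a) (hb : b ≤ 1) (k : ℕ) :
    IntegrableOn (fun t => w t * (1 - log t) ^ k) (Ioc a b) := by
  refine (hw.mono_set (Ioc_subset_Ioc ha.le hb)).mul_bdd (c := (1 - log a) ^ k)
    (by fun_prop) (ae_restrict_of_forall_mem measurableSet_Ioc fun t ht => ?_)
  have ht0 : 0 < t := ha.trans ht.1
  rw [norm_pow, Real.norm_of_nonneg (by linarith [log_nonpos ht0.le (ht.2.trans hb)])]
  gcongr
  · linarith [log_nonpos ht0.le (ht.2.trans hb)]
  · exact ht.1.le

theorem Ioc_zero_one_subset_union_dyadic (t₁ : ℝ) :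
    Ioc 0 1 ⊆ Ioc t₁ 1 ∪ ⋃ n : ℕ, Ioc (t₁ / 2 ^ (n + 1)) (t₁ / 2 ^ n) := by
  rintro t ⟨ht0, ht1⟩
  rcases lt_or_ge t₁ t with h | h
  · exact Or.inl ⟨h, ht1⟩
  obtain ⟨n, hn₁, hn₂⟩ := exists_nat_pow_near ((one_le_div ht0).2 h) one_lt_two
  rw [le_div_iff₀ ht0] at hn₁
  rw [div_lt_iff₀ ht0] at hn₂
  refine Or.inr (mem_iUnion.2 ⟨n, ?_, ?_⟩)
  · rw [div_lt_iff₀ (by positivity)]; linarith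
  · rw [le_div_iff₀ (by positivity)]; linarith

theorem one_sub_log_le_of_mem_dyadic {t₁ t : ℝ} (ht₁ : 0 < t₁) (ht₁1 : t₁ ≤ 1) {n : ℕ}
    (ht : t ∈ Ioc (t₁ / 2 ^ (n + 1)) (t₁ / 2 ^ n)) :
    1 - log t ≤ (1 - log t₁ + log 2) * (n + 1) := by
  have hlog : log t₁ - (n + 1) * log 2 < log t := by
    have := log_lt_log (by positivity) ht.1
    rwa [log_div ht₁.ne' (by positivity), log_pow, Nat.cast_succ] at this
  have : (0 : ℝ) ≤ n := n.cast_nonneg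
  nlinarith [log_nonpos ht₁.le ht₁1, log_pos one_lt_two]

theorem integrableOn_mul_one_sub_log_pow (hw_nonneg : ∀ t ∈ Ioc 0 1, 0 ≤ w t)
    (hw : IntegrableOn w (Ioc 0 1)) (hr0 : 0 ≤ r) (hr1 : r < 1)
    (hdouble : ∀ᶠ t in 𝓝[>] 0, w (t / 2) ≤ 2 * r * w t) (k : ℕ) :
    IntegrableOn (fun t => w t * (1 - log t) ^ k) (Ioc 0 1) := by
  obtain ⟨t₀, ht₀, hsub⟩ := mem_nhdsGT_iff_exists_Ioc_subset.1 hdouble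
  set t₁ := min t₀ 1
  have ht₁ : 0 < t₁ := lt_min ht₀ one_pos
  have ht₁1 : t₁ ≤ 1 := min_le_right _ _
  have hdiv_le (n : ℕ) : t₁ / 2 ^ n ≤ 1 :=
    (div_le_self ht₁.le (one_le_pow₀ one_le_two)).trans ht₁1
  set c := 1 - log t₁ + log 2
  have hc : 0 ≤ c := by linarith [log_nonpos ht₁.le ht₁1, log_pos one_lt_two]
  have hblock (n : ℕ) : ∫ t in Ioc (t₁ / 2 ^ (n + 1)) (t₁ / 2 ^ n), ‖w t * (1 - log t) ^ k‖ ≤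
      (c ^ k * ∫ t in Ioc 0 t₁, w t) * (((n : ℝ) + 1) ^ k * r ^ n) := by
    have hB : Ioc (t₁ / 2 ^ (n + 1)) (t₁ / 2 ^ n) ⊆ Ioc 0 (t₁ / 2 ^ n) :=
      Ioc_subset_Ioc_left (by positivity)
    have hB1 : Ioc 0 (t₁ / 2 ^ n) ⊆ Ioc 0 1 := Ioc_subset_Ioc_right (hdiv_le n)
    calc ∫ t in Ioc (t₁ / 2 ^ (n + 1)) (t₁ / 2 ^ n), ‖w t * (1 - log t) ^ k‖
        ≤ ∫ t in Ioc (t₁ / 2 ^ (n + 1)) (t₁ / 2 ^ n), w t * (c * ((n : ℝ) + 1)) ^ k := by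
          refine setIntegral_mono_on
            (integrableOn_Ioc_mul_one_sub_log_pow hw (by positivity) (hdiv_le n) k).norm
            ((hw.mono_set (hB.trans hB1)).mul_const _) measurableSet_Ioc fun t ht => ?_
          have ht01 := hB1 (hB ht)
          rw [norm_mul, norm_pow, Real.norm_of_nonneg (hw_nonneg t ht01),
            Real.norm_of_nonneg (by linarith [log_nonpos ht01.1.le ht01.2])]
          gcongr
          · exact hw_nonneg t ht01
          · linarith [log_nonpos ht01.1.le ht01.2]
          · exact one_sub_log_le_of_mem_dyadic ht₁ ht₁1 ht
      _ ≤ (c * ((n : ℝ) + 1)) ^ k * ∫ t in Ioc 0 (t₁ / 2 ^ n), w t := by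
          rw [integral_mul_const, mul_comm]
          exact mul_le_mul_of_nonneg_left (setIntegral_mono_set (hw.mono_set hB1)
              (ae_restrict_of_forall_mem measurableSet_Ioc fun t ht => hw_nonneg t (hB1 ht))
              (Eventually.of_forall hB)) (by positivity)
      _ ≤ (c * ((n : ℝ) + 1)) ^ k * (r ^ n * ∫ t in Ioc 0 t₁, w t) := by
          gcongr
          exact setIntegral_Ioc_div_two_pow_le ht₁ hr0 (hw.mono_set (Ioc_subset_Ioc_right ht₁1))
            (fun t ht => hsub ⟨ht.1, ht.2.trans (min_le_left _ _)⟩) n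
      _ = (c ^ k * ∫ t in Ioc 0 t₁, w t) * (((n : ℝ) + 1) ^ k * r ^ n) := by
          rw [mul_pow]; ring
  have hunion : IntegrableOn (fun t => w t * (1 - log t) ^ k)
      (⋃ n : ℕ, Ioc (t₁ / 2 ^ (n + 1)) (t₁ / 2 ^ n)) :=
    integrableOn_iUnion_of_summable_integral_norm
      (fun n => integrableOn_Ioc_mul_one_sub_log_pow hw (by positivity) (hdiv_le n) k)
      (((summable_succ_pow_mul_geometric k hr0 hr1).mul_left _).of_nonneg_of_le
        (fun n => integral_nonneg fun _ => norm_nonneg _) hblock)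
  exact ((integrableOn_Ioc_mul_one_sub_log_pow hw ht₁ le_rfl k).union hunion).mono_set
    (Ioc_zero_one_subset_union_dyadic t₁)

end weightIntegrability

namespace IsWeight

variable {w : ℝ → ℝ} {κ : ℝ} {ℓ : ℝ → ℝ}

theorem integrableOn (hw : IsWeight w κ ℓ) : IntegrableOn w (Ioc 0 1) := by
  by_contra h
  simpa [integral_undef h] using hw.total

theorem tendsto_half_div (hw : IsWeight w κ ℓ) :
    Tendsto (fun t => w (t / 2) / w t) (𝓝[>] 0) (𝓝 (2 ^ (-κ))) := by
  have hwg : w ~[𝓝[>] 0] fun t => t ^ κ * ℓ (1 / t) := isEquivalent_of_tendsto_one hw.asym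
  have hhalf : Tendsto (fun t : ℝ => t / 2) (𝓝[>] 0) (𝓝[>] 0) :=
    tendsto_nhdsWithin_iff.2
      ⟨by simpa using ((continuous_id.div_const (2 : ℝ)).tendsto 0).mono_left nhdsWithin_le_nhds,
        eventually_nhdsWithin_of_forall fun t (ht : 0 < t) => half_pos ht⟩
  refine ((hwg.comp_tendsto hhalf).div hwg).tendsto_nhds_iff.2 ?_
  have hℓ := ((hw.slow 2 two_pos).comp tendsto_inv_nhdsGT_zero).const_mul (2 ^ (-κ))
  rw [Real.rpow_zero, mul_one] at hℓ
  refine hℓ.congr' ?_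
  filter_upwards [self_mem_nhdsWithin] with t (ht : 0 < t)
  simp only [Function.comp_apply, Pi.div_apply, one_div, inv_div]
  rw [mul_div_mul_comm, Real.div_rpow ht.le zero_le_two, div_div_cancel_left' (by positivity),
    Real.rpow_neg zero_le_two, inv_mul_eq_div t 2]

theorem exists_eventually_half_le (hw : IsWeight w κ ℓ) :
    ∃ r, 0 ≤ r ∧ r < 1 ∧ ∀ᶠ t in 𝓝[>] 0, w (t / 2) ≤ 2 * r * w t := by
  have h2κ : (2 : ℝ) ^ (-κ) < 2 := by
    simpa using Real.rpow_lt_rpow_of_exponent_lt one_lt_two (by linarith [hw.kappa_gt] : -κ < 1)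
  have h2κ0 : (0 : ℝ) < 2 ^ (-κ) := by positivity
  refine ⟨(2 ^ (-κ) + 2) / 4, by positivity, by linarith, ?_⟩
  filter_upwards [hw.tendsto_half_div.eventually (eventually_lt_nhds (by linarith :
      (2 : ℝ) ^ (-κ) < 2 * ((2 ^ (-κ) + 2) / 4))),
    hw.asym.eventually (eventually_gt_nhds one_pos), Ioc_mem_nhdsGT one_pos] with t hlt hpos ht
  have hwt : 0 < w t := (hw.nonneg t ht).lt_of_ne fun h => by simp [← h] at hpos
  exact ((div_lt_iff₀ hwt).1 hlt).le

theorem integrableOn_mul_one_sub_log_pow (hw : IsWeight w κ ℓ) (k : ℕ) :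
    IntegrableOn (fun t => w t * (1 - log t) ^ k) (Ioc 0 1) := by
  obtain ⟨r, hr0, hr1, hdouble⟩ := hw.exists_eventually_half_le
  exact _root_.integrableOn_mul_one_sub_log_pow hw.nonneg hw.integrableOn hr0 hr1 hdouble k

end IsWeight

section abelian

variable {w V : ℝ → ℝ} {y₀ ρ : ℝ}

theorem sub_log_mem_Ici {u t : ℝ} (hu : y₀ ≤ u) (ht : t ∈ Ioc 0 1) : u - log t ∈ Ici y₀ :=
  mem_Ici.2 (by linarith [log_nonpos ht.1.le ht.2])

theorem aemeasurable_mul_comp_sub_log (hw : AEMeasurable w (volume.restrict (Ioc 0 1)))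
    (hmono : MonotoneOn V (Ici y₀)) {u : ℝ} (hu : y₀ ≤ u) :
    AEMeasurable (fun t => w t * V (u - log t)) (volume.restrict (Ioc 0 1)) := by
  have hanti : AntitoneOn (fun t => V (u - log t)) (Ioc 0 1) := fun t ht t' ht' htt' =>
    hmono (sub_log_mem_Ici hu ht') (sub_log_mem_Ici hu ht) (by linarith [log_le_log ht.1 htt'])
  exact hw.mul (aemeasurable_restrict_of_antitoneOn measurableSet_Ioc hanti)

theorem tendsto_setIntegral_mul_comp_sub_log_div (hw_nonneg : ∀ t ∈ Ioc 0 1, 0 ≤ w t)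
    (hw_log : ∀ k : ℕ, IntegrableOn (fun t => w t * (1 - log t) ^ k) (Ioc 0 1))
    (hV : RegVary V ρ) (hmono : MonotoneOn V (Ici y₀)) (hpos : ∀ y ∈ Ici y₀, 0 < V y) :
    Tendsto (fun u => ∫ t in Ioc 0 1, w t * V (u - log t) / V u) atTop
      (𝓝 (∫ t in Ioc 0 1, w t)) := by
  obtain ⟨C, k, u₀, hpotter⟩ := hV.exists_le_mul_one_add_pow hmono hpos
  have hw : IntegrableOn w (Ioc 0 1) := by simpa using hw_log 0
  have hlog (t : ℝ) (ht : t ∈ Ioc 0 1) : 0 ≤ -log t := neg_nonneg.2 (log_nonpos ht.1.le ht.2)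
  refine tendsto_integral_filter_of_dominated_convergence (fun t => C * (w t * (1 - log t) ^ k))
    ((eventually_ge_atTop y₀).mono fun u hu =>
      ((aemeasurable_mul_comp_sub_log hw.aemeasurable hmono hu).div_const _).aestronglyMeasurable)
    ?_ ((hw_log k).const_mul C) (ae_restrict_of_forall_mem measurableSet_Ioc fun t ht => ?_)
  · filter_upwards [eventually_ge_atTop u₀, eventually_ge_atTop y₀] with u hu₀ hy₀
    refine ae_restrict_of_forall_mem measurableSet_Ioc fun t ht => ?_
    have hVu := hpos u hy₀
    rw [norm_of_nonneg (div_nonneg (mul_nonneg (hw_nonneg t ht)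
      (hpos _ (sub_log_mem_Ici hy₀ ht)).le) hVu.le), div_le_iff₀ hVu, sub_eq_add_neg]
    calc w t * V (u + -log t) ≤ w t * (C * (1 + -log t) ^ k * V u) :=
          mul_le_mul_of_nonneg_left (hpotter u hu₀ _ (hlog t ht)) (hw_nonneg t ht)
      _ = C * (w t * (1 - log t) ^ k) * V u := by rw [← sub_eq_add_neg]; ring
  · simpa [mul_div_assoc, sub_eq_add_neg] using
      (hV.tendsto_comp_add_div hmono hpos (hlog t ht)).const_mul (w t)

theorem tendsto_toReal_setLIntegral_mul_comp_sub_log_div (hw_nonneg : ∀ t ∈ Ioc 0 1, 0 ≤ w t)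
    (hw_log : ∀ k : ℕ, IntegrableOn (fun t => w t * (1 - log t) ^ k) (Ioc 0 1))
    (hV : RegVary V ρ) (hmono : MonotoneOn V (Ici y₀)) (hpos : ∀ y ∈ Ici y₀, 0 < V y) :
    Tendsto (fun u => (∫⁻ t in Ioc 0 1, ENNReal.ofReal (w t * V (u - log t))).toReal / V u)
      atTop (𝓝 (∫ t in Ioc 0 1, w t)) := by
  refine (tendsto_setIntegral_mul_comp_sub_log_div hw_nonneg hw_log hV hmono hpos).congr' ?_
  filter_upwards [eventually_ge_atTop y₀] with u hu
  have hw : IntegrableOn w (Ioc 0 1) := by simpa using hw_log 0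
  rw [integral_div, integral_eq_lintegral_of_nonneg_ae
    (ae_restrict_of_forall_mem measurableSet_Ioc fun t ht =>
      mul_nonneg (hw_nonneg t ht) (hpos _ (sub_log_mem_Ici hu ht)).le)
    (aemeasurable_mul_comp_sub_log hw.aemeasurable hmono hu).aestronglyMeasurable]

end abelian

section hazard

variable {P : Measure ℝ} {γ : ℝ}

theorem survival_antitone [IsFiniteMeasure P] : Antitone (survival P) := fun _ _ hxy =>
  ENNReal.toReal_mono (measure_ne_top _ _) (measure_mono (Ioi_subset_Ioi hxy))

theorem hazard_nonneg [IsProbabilityMeasure P] (x : ℝ) : 0 ≤ hazard P x :=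
  neg_nonneg.2 (log_nonpos ENNReal.toReal_nonneg measureReal_le_one)

theorem WeibullTailed.survival_pos [IsFiniteMeasure P] (hP : WeibullTailed P γ) (x : ℝ) :
    0 < survival P x := by
  refine ENNReal.toReal_nonneg.lt_of_ne' fun hx => ?_
  obtain ⟨t, hxt, ht⟩ := ((eventually_ge_atTop x).and (RegVary.eventually_ne_zero hP)).exists
  have : survival P t = 0 := le_antisymm (hx ▸ survival_antitone hxt) ENNReal.toReal_nonneg
  simp [hazard, this] at ht

theorem WeibullTailed.monotone_hazard [IsFiniteMeasure P] (hP : WeibullTailed P γ) :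
    Monotone (hazard P) := fun _ _ hxy =>
  neg_le_neg (log_le_log (hP.survival_pos _) (survival_antitone hxy))

theorem WeibullTailed.tendsto_hazard [IsProbabilityMeasure P] (hP : WeibullTailed P γ)
    (hγ : 0 < γ) : Tendsto (hazard P) atTop atTop :=
  RegVary.tendsto_atTop_of_monotone hP hγ hP.monotone_hazard hazard_nonneg

theorem VaR_exp_neg_eq_genInv [IsFiniteMeasure P] (hpos : ∀ x, 0 < survival P x) (y : ℝ) :
    VaR P (exp (-y)) = genInv (hazard P) y := by
  refine congrArg sInf (Set.ext fun u => ?_)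
  change P (Ioi u) ≤ _ ↔ y ≤ hazard P u
  rw [← ENNReal.ofReal_toReal (measure_ne_top P (Ioi u)),
    ENNReal.ofReal_le_ofReal_iff (exp_pos _).le, ← survival, ← log_le_iff_le_exp (hpos u), hazard,
    le_neg]

end hazard

/-- if `P` has Weibull-type tails with index `γ`, then
`ρ_{1-β}(P) = (log(1/β))^{1/γ} ℓ₂(log(1/β))` for some slowly varying `ℓ₂`;
equivalently, `u ↦ u^{-1/γ} ρ_{1-e^{-u}}(P)` is slowly varying at infinity. -/
theorem tailRisk_regVary_of_weibullTailed
    (w : ℝ → ℝ) (κ : ℝ) (ℓ : ℝ → ℝ) (hw : IsWeight w κ ℓ)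
    (P : Measure ℝ) [IsProbabilityMeasure P]
    (γ : ℝ) (hγ : 0 < γ) (hP : WeibullTailed P γ) :
    RegVary (fun u : ℝ => u ^ (-(1 / γ)) * (tailRisk w (Real.exp (-u)) P).toReal) 0 := by
  have hΛ := hP.monotone_hazard
  have hΛ_top := hP.tendsto_hazard hγ
  set V := genInv (hazard P)
  have hV : RegVary V γ⁻¹ := RegVary.genInv hΛ hΛ_top hP hγ
  have hlt : hazard P 1 < hazard P 1 + 1 := lt_add_one _
  have hpos (y : ℝ) (hy : y ∈ Ici (hazard P 1 + 1)) : 0 < V y :=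
    one_pos.trans_le (le_genInv_of_lt hΛ hΛ_top (hlt.trans_le hy))
  have hVaR : ∀ y, VaR P (exp (-y)) = V y := VaR_exp_neg_eq_genInv hP.survival_pos
  have hrisk (u : ℝ) : tailRisk w (exp (-u)) P =
      ∫⁻ t in Ioc 0 1, ENNReal.ofReal (w t * V (u - log t)) :=
    setLIntegral_congr_fun measurableSet_Ioc fun t ht => by
      rw [← hVaR, neg_sub, exp_sub, exp_log ht.1, exp_neg, div_eq_mul_inv, mul_comm t]
  have hratio : Tendsto (fun u => (tailRisk w (exp (-u)) P).toReal / V u) atTop (𝓝 1) := by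
    simpa [hrisk, hw.total] using tendsto_toReal_setLIntegral_mul_comp_sub_log_div hw.nonneg
      hw.integrableOn_mul_one_sub_log_pow hV (monotoneOn_genInv hΛ hΛ_top hlt) hpos
  have hequiv := isEquivalent_of_tendsto_one (u := fun u => (tailRisk w (exp (-u)) P).toReal)
    (v := V) hratio
  convert (hV.of_isEquivalent hequiv).rpow_mul (-(1 / γ)) using 1
  rw [one_div, neg_add_cancel]

end
end

section
/- Let (U_i)_{i≥1} be i.i.d. random variables uniformly distributed on [0,1], and for each n let U_{k:n} denote the k-th smallest value among U_1,…,U_n. Fix 0 < ε < 1/2 and for θ ∈ [ε, 1−ε] set k_{n,θ} = ⌊n^{1−θ}⌋. Then sup_{θ ∈ [ε,1−ε]} | (n / k_{n,θ}) · U_{k_{n,θ}:n} − 1 | → 0 almost surely as n → ∞. -/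
open MeasureTheory Filter Set
open scoped ENNReal NNReal Topology Classical

noncomputable section

/-- The `k`-th smallest value among `U 0 ω, …, U (n-1) ω`. -/
def orderStat {Ω : Type*} (U : ℕ → Ω → ℝ) (n k : ℕ) (ω : Ω) : ℝ :=
  sInf {x : ℝ | k ≤ ((Finset.range n).filter (fun i => U i ω ≤ x)).card}

/-!
Let `F_n(x) = #{i < n | U_i ≤ x}`, a binomial count with mean `n x`. The order statistic
`U_{k:n}` lies in `[k / ((1 + η) n), k / ((1 - η) n)]` as soon as `F_n(k / ((1 + η) n)) < k` and
`k ≤ F_n(k / ((1 - η) n))`, and the multiplicative Chernoff bounds for the binomial distribution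
make each of these fail with probability at most `exp (-η² k / 9)`. For `θ ∈ [ε, 1 - ε]` the
indices `k = ⌊n ^ (1 - θ)⌋` take at most `n + 1` values, all at least `⌊n ^ ε⌋`, so the union
bound makes the probability that one of them fails `O(n exp (-η² n ^ ε / 9))`, which is summable
in `n`. By Borel–Cantelli, almost surely `|(n / k) U_{k:n} - 1| ≤ 2η` uniformly in `θ` for all
large `n`; letting `η` run through a sequence tending to `0` gives the theorem.
-/

open ProbabilityTheory Real

theorem exp_mul_indicator_one {Ω : Type*} (A : Set Ω) (t : ℝ) (ω : Ω) :
    exp (t * A.indicator 1 ω) = 1 + (exp t - 1) * A.indicator 1 ω := by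
  by_cases hω : ω ∈ A <;> simp [hω]

section BinomialTail

variable {Ω : Type*} [MeasurableSpace Ω] {μ : Measure Ω}

theorem integrable_exp_mul_indicator_one [IsFiniteMeasure μ] {A : Set Ω} (hA : MeasurableSet A)
    (t : ℝ) : Integrable (fun ω => exp (t * A.indicator 1 ω)) μ := by
  simp_rw [exp_mul_indicator_one]
  exact (integrable_const 1).add (((integrable_const 1).indicator hA).const_mul _)

theorem mgf_indicator_one [IsProbabilityMeasure μ] {A : Set Ω} (hA : MeasurableSet A) (t : ℝ) :
    mgf (A.indicator 1) μ t = 1 + μ.real A * (exp t - 1) := by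
  rw [mgf]
  simp_rw [exp_mul_indicator_one]
  rw [integral_add (integrable_const 1) (((integrable_const 1).indicator hA).const_mul _),
    integral_const_mul, integral_indicator_one hA]
  simp [mul_comm]

variable {A : ℕ → Set Ω} {p : ℝ}

theorem mgf_sum_indicator_le (hA : ∀ i, MeasurableSet (A i))
    (hind : iIndepFun (fun i => (A i).indicator (1 : Ω → ℝ)) μ) (hp : ∀ i, μ.real (A i) = p)
    (n : ℕ) (t : ℝ) :
    mgf (∑ i ∈ Finset.range n, (A i).indicator 1) μ t ≤ exp (n * p * (exp t - 1)) := by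
  have := hind.isProbabilityMeasure
  have hp0 : 0 ≤ p := hp 0 ▸ measureReal_nonneg
  have hp1 : p ≤ 1 := hp 0 ▸ measureReal_le_one
  rw [hind.mgf_sum (fun i => measurable_one.indicator (hA i)),
    Finset.prod_congr rfl fun i _ => by rw [mgf_indicator_one (hA i) t, hp i],
    Finset.prod_const, Finset.card_range, mul_assoc, exp_nat_mul]
  gcongr
  · nlinarith [exp_pos t]
  · linarith [add_one_le_exp (p * (exp t - 1))]

theorem integrable_exp_mul_sum_indicator (hA : ∀ i, MeasurableSet (A i))
    (hind : iIndepFun (fun i => (A i).indicator (1 : Ω → ℝ)) μ) (n : ℕ) (t : ℝ) :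
    Integrable (fun ω => exp (t * (∑ i ∈ Finset.range n, (A i).indicator 1) ω)) μ := by
  have := hind.isProbabilityMeasure
  exact hind.integrable_exp_mul_sum (fun i => measurable_one.indicator (hA i))
    fun i _ => integrable_exp_mul_indicator_one (hA i) t

theorem chernoff_exponent_le {η m : ℝ} (hη : |η| ≤ 3) (hm : 0 ≤ m) :
    -(η / 3) * ((1 + η) * m) + m * (exp (η / 3) - 1) ≤ -(2 / 9) * η ^ 2 * m := by
  have hexp := (abs_le.1 (abs_exp_sub_one_sub_id_le (x := η / 3)
    (by rw [abs_div, abs_of_pos (by norm_num : (0 : ℝ) < 3)]; linarith))).2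
  nlinarith [mul_le_mul_of_nonneg_left hexp hm]

theorem measure_mul_le_sum_indicator_le (hA : ∀ i, MeasurableSet (A i))
    (hind : iIndepFun (fun i => (A i).indicator (1 : Ω → ℝ)) μ) (hp : ∀ i, μ.real (A i) = p)
    (n : ℕ) {η : ℝ} (hη0 : 0 ≤ η) (hη3 : η ≤ 3) :
    μ {ω | (1 + η) * (n * p) ≤ (∑ i ∈ Finset.range n, (A i).indicator 1) ω} ≤
      ENNReal.ofReal (exp (-(2 / 9) * η ^ 2 * (n * p))) := by
  have := hind.isProbabilityMeasure
  have hp0 : 0 ≤ p := hp 0 ▸ measureReal_nonneg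
  rw [← ofReal_measureReal]
  refine ENNReal.ofReal_le_ofReal ?_
  calc _ ≤ exp (-(η / 3) * ((1 + η) * (n * p))) *
        mgf (∑ i ∈ Finset.range n, (A i).indicator 1) μ (η / 3) :=
        measure_ge_le_exp_mul_mgf _ (by positivity) (integrable_exp_mul_sum_indicator hA hind n _)
    _ ≤ exp (-(η / 3) * ((1 + η) * (n * p))) * exp (n * p * (exp (η / 3) - 1)) := by
        gcongr; exact mgf_sum_indicator_le hA hind hp n _
    _ ≤ exp (-(2 / 9) * η ^ 2 * (n * p)) := by
        have := chernoff_exponent_le (m := n * p) (abs_le.2 ⟨by linarith, hη3⟩) (by positivity)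
        rw [← exp_add]
        exact exp_le_exp.2 (by linarith)

theorem measure_sum_indicator_le_mul_le (hA : ∀ i, MeasurableSet (A i))
    (hind : iIndepFun (fun i => (A i).indicator (1 : Ω → ℝ)) μ) (hp : ∀ i, μ.real (A i) = p)
    (n : ℕ) {η : ℝ} (hη0 : 0 ≤ η) (hη3 : η ≤ 3) :
    μ {ω | (∑ i ∈ Finset.range n, (A i).indicator 1) ω ≤ (1 - η) * (n * p)} ≤
      ENNReal.ofReal (exp (-(2 / 9) * η ^ 2 * (n * p))) := by
  have := hind.isProbabilityMeasure
  have hp0 : 0 ≤ p := hp 0 ▸ measureReal_nonneg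
  rw [← ofReal_measureReal]
  refine ENNReal.ofReal_le_ofReal ?_
  calc _ ≤ exp (-(-η / 3) * ((1 - η) * (n * p))) *
        mgf (∑ i ∈ Finset.range n, (A i).indicator 1) μ (-η / 3) :=
        measure_le_le_exp_mul_mgf _ (by linarith) (integrable_exp_mul_sum_indicator hA hind n _)
    _ ≤ exp (-(-η / 3) * ((1 - η) * (n * p))) * exp (n * p * (exp (-η / 3) - 1)) := by
        gcongr; exact mgf_sum_indicator_le hA hind hp n _
    _ ≤ exp (-(2 / 9) * η ^ 2 * (n * p)) := by
        have := chernoff_exponent_le (η := -η) (m := n * p) (abs_le.2 ⟨by linarith, by linarith⟩)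
          (by positivity)
        rw [← exp_add]
        exact exp_le_exp.2 (by linarith)

end BinomialTail

theorem summable_add_one_mul_exp_neg_mul_rpow {c ε : ℝ} (hc : 0 < c) (hε : 0 < ε) :
    Summable fun n : ℕ => ((n : ℝ) + 1) * exp (-c * (n : ℝ) ^ ε) := by
  have hexp : (fun n : ℕ => exp (-c * (n : ℝ) ^ ε)) =O[atTop] fun n : ℕ => (n : ℝ) ^ (-3 : ℝ) := by
    refine ((isLittleO_exp_neg_mul_rpow_atTop hc (-3 / ε)).comp_tendsto
      ((tendsto_rpow_atTop hε).comp tendsto_natCast_atTop_atTop)).isBigO.congr_right fun n => ?_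
    simp only [Function.comp_apply]
    rw [← rpow_mul n.cast_nonneg, mul_div_cancel₀ _ hε.ne']
  have hpow : Summable fun n : ℕ => ((n : ℝ) + 1) * (n : ℝ) ^ (-3 : ℝ) := by
    have h2 := summable_nat_rpow.2 (by norm_num : (-2 : ℝ) < -1)
    have h3 := summable_nat_rpow.2 (by norm_num : (-3 : ℝ) < -1)
    refine (h2.add h3).congr fun n => ?_
    rw [add_mul, one_mul, ← rpow_one_add' n.cast_nonneg (by norm_num)]
    norm_num
  exact summable_of_isBigO_nat hpow ((Asymptotics.isBigO_refl _ _).mul hexp)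

theorem ae_tendsto_zero_of_forall_pos_ae_eventually_abs_le {Ω : Type*} [MeasurableSpace Ω]
    {μ : Measure Ω} {f : ℕ → Ω → ℝ} (h : ∀ δ > 0, ∀ᵐ ω ∂μ, ∀ᶠ n in atTop, |f n ω| ≤ δ) :
    ∀ᵐ ω ∂μ, Tendsto (fun n => f n ω) atTop (𝓝 0) := by
  have hall : ∀ᵐ ω ∂μ, ∀ j : ℕ, ∀ᶠ n in atTop, |f n ω| ≤ 1 / (j + 1) :=
    ae_all_iff.2 fun j => h _ Nat.one_div_pos_of_nat
  filter_upwards [hall] with ω hω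
  refine Metric.tendsto_nhds.2 fun δ hδ => ?_
  obtain ⟨j, hj⟩ := exists_nat_one_div_lt hδ
  filter_upwards [hω j] with n hn
  rw [Real.dist_eq, sub_zero]
  exact hn.trans_lt hj

theorem abs_div_mul_sub_one_le_of_mem_Icc {η n k y : ℝ} (hη0 : 0 ≤ η) (hη : η ≤ 1 / 2)
    (hn : 0 < n) (hk : 0 < k) (hy : y ∈ Icc (k / ((1 + η) * n)) (k / ((1 - η) * n))) :
    |n / k * y - 1| ≤ 2 * η := by
  have hlow := (div_le_iff₀ (by positivity)).1 hy.1
  have hupp := (le_div_iff₀ (by nlinarith)).1 hy.2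
  have hz : n / k * y * k = n * y := by field_simp
  rw [abs_le]
  constructor <;> nlinarith

theorem floor_rpow_mem_Icc {n : ℕ} (hn : 1 ≤ n) {ε a : ℝ} (hεa : ε ≤ a) (ha : a ≤ 1) :
    ⌊(n : ℝ) ^ a⌋₊ ∈ Finset.Icc ⌊(n : ℝ) ^ ε⌋₊ n := by
  have hn' : (1 : ℝ) ≤ n := by exact_mod_cast hn
  refine Finset.mem_Icc.2 ⟨Nat.floor_le_floor (rpow_le_rpow_of_exponent_le hn' hεa), ?_⟩
  exact Nat.floor_le_of_le ((rpow_le_rpow_of_exponent_le hn' ha).trans_eq (rpow_one _))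

section OrderStatistics

variable {Ω : Type*} {U : ℕ → Ω → ℝ}

def countLE (U : ℕ → Ω → ℝ) (n : ℕ) (x : ℝ) (ω : Ω) : ℕ :=
  ((Finset.range n).filter (fun i => U i ω ≤ x)).card

theorem countLE_mono (n : ℕ) (ω : Ω) : Monotone fun x => countLE U n x ω :=
  fun _ _ hxy => Finset.card_le_card fun _ hi => by
    simp only [Finset.mem_filter] at hi ⊢
    exact ⟨hi.1, hi.2.trans hxy⟩

theorem countLE_eq_of_forall_le {n : ℕ} {x : ℝ} {ω : Ω} (h : ∀ i, U i ω ≤ x) :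
    countLE U n x ω = n := by
  simp [countLE, h]

theorem countLE_eq_sum_indicator (n : ℕ) (x : ℝ) (ω : Ω) :
    (countLE U n x ω : ℝ) = (∑ i ∈ Finset.range n, (U i ⁻¹' Iic x).indicator 1) ω := by
  rw [countLE, Finset.card_filter, Finset.sum_apply]
  push_cast
  simp [Set.indicator_apply]

theorem orderStat_mem_Icc {n k : ℕ} {ω : Ω} {a b : ℝ} (ha : countLE U n a ω < k)
    (hb : k ≤ countLE U n b ω) : orderStat U n k ω ∈ Icc a b := by
  have hlow : a ∈ lowerBounds {x | k ≤ countLE U n x ω} := fun x hx =>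
    le_of_not_gt fun hxa => (hx.trans (countLE_mono n ω hxa.le)).not_gt ha
  exact ⟨le_csInf ⟨b, hb⟩ hlow, csInf_le ⟨a, hlow⟩ hb⟩

end OrderStatistics

section UniformSample

variable {Ω : Type*} [MeasurableSpace Ω] {μ : Measure Ω}

theorem measureReal_preimage_Iic_of_map_eq {V : Ω → ℝ} (hV : Measurable V)
    (hunif : μ.map V = volume.restrict (Icc 0 1)) {x : ℝ} (hx : x ∈ Icc (0 : ℝ) 1) :
    μ.real (V ⁻¹' Iic x) = x := by
  have hinter : Iic x ∩ Icc 0 1 = Icc 0 x := Set.ext fun y => by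
    simp only [mem_inter_iff, mem_Iic, mem_Icc]
    exact ⟨fun h => ⟨h.2.1, h.1⟩, fun h => ⟨h.2, h.1, h.2.trans hx.2⟩⟩
  rw [measureReal_def, ← Measure.map_apply hV measurableSet_Iic, hunif,
    Measure.restrict_apply measurableSet_Iic, hinter, Real.volume_Icc, sub_zero,
    ENNReal.toReal_ofReal hx.1]

theorem ae_le_one_of_map_eq {V : Ω → ℝ} (hV : Measurable V)
    (hunif : μ.map V = volume.restrict (Icc 0 1)) : ∀ᵐ ω ∂μ, V ω ≤ 1 :=
  (ae_map_iff hV.aemeasurable measurableSet_Iic).1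
    (hunif ▸ ae_restrict_of_forall_mem measurableSet_Icc fun _ hy => hy.2)

variable {U : ℕ → Ω → ℝ}

theorem ProbabilityTheory.iIndepFun.indicator_preimage (hindep : iIndepFun U μ) {s : Set ℝ}
    (hs : MeasurableSet s) :
    iIndepFun (fun i => (U i ⁻¹' s).indicator (1 : Ω → ℝ)) μ :=
  hindep.comp (fun _ => s.indicator 1) fun _ => measurable_one.indicator hs

theorem measure_le_countLE_le (hmeas : ∀ i, Measurable (U i)) (hindep : iIndepFun U μ)
    (hunif : ∀ i, μ.map (U i) = volume.restrict (Icc 0 1)) {η : ℝ} (hη0 : 0 ≤ η) (hη1 : η ≤ 1)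
    {n k : ℕ} (hkn : k ≤ n) :
    μ {ω | k ≤ countLE U n (k / ((1 + η) * n)) ω} ≤ ENNReal.ofReal (exp (-(η ^ 2 / 9) * k)) := by
  set x : ℝ := k / ((1 + η) * n)
  have hkn' : (k : ℝ) ≤ n := by exact_mod_cast hkn
  have hx : x ∈ Icc (0 : ℝ) 1 := by
    refine ⟨by positivity, div_le_one_of_le₀ ?_ (by positivity)⟩
    nlinarith [(n.cast_nonneg : (0 : ℝ) ≤ n)]
  have hmean : (1 + η) * (n * x) = k := by
    rcases n.eq_zero_or_pos with rfl | hn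
    · simp [Nat.le_zero.1 hkn]
    · simp only [x]; field_simp
  calc μ {ω | k ≤ countLE U n x ω}
      = μ {ω | (1 + η) * (n * x) ≤ (∑ i ∈ Finset.range n, (U i ⁻¹' Iic x).indicator 1) ω} := by
        simp_rw [hmean, ← countLE_eq_sum_indicator, Nat.cast_le]
    _ ≤ ENNReal.ofReal (exp (-(2 / 9) * η ^ 2 * (n * x))) :=
        measure_mul_le_sum_indicator_le (fun i => hmeas i measurableSet_Iic)
          (hindep.indicator_preimage measurableSet_Iic)
          (fun i => measureReal_preimage_Iic_of_map_eq (hmeas i) (hunif i) hx) n hη0 (by linarith)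
    _ ≤ ENNReal.ofReal (exp (-(η ^ 2 / 9) * k)) := by
        refine ENNReal.ofReal_le_ofReal (exp_le_exp.2 ?_)
        rw [← hmean]
        nlinarith [mul_le_mul_of_nonneg_left hη1
          (mul_nonneg (sq_nonneg η) (mul_nonneg n.cast_nonneg hx.1))]

theorem measure_countLE_lt_le (hmeas : ∀ i, Measurable (U i)) (hindep : iIndepFun U μ)
    (hunif : ∀ i, μ.map (U i) = volume.restrict (Icc 0 1)) {η : ℝ} (hη0 : 0 ≤ η) (hη1 : η < 1)
    {n k : ℕ} (hkn : k ≤ n) :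
    μ {ω | countLE U n (k / ((1 - η) * n)) ω < k} ≤ ENNReal.ofReal (exp (-(η ^ 2 / 9) * k)) := by
  set x : ℝ := k / ((1 - η) * n)
  have hx0 : 0 ≤ x := div_nonneg k.cast_nonneg (mul_nonneg (by linarith) n.cast_nonneg)
  rcases le_or_gt x 1 with hx1 | hx1
  · have hmean : (1 - η) * (n * x) = k := by
      rcases n.eq_zero_or_pos with rfl | hn
      · simp [Nat.le_zero.1 hkn]
      · have : (1 : ℝ) - η ≠ 0 := by linarith
        simp only [x]; field_simp
    calc μ {ω | countLE U n x ω < k}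
        ≤ μ {ω | (∑ i ∈ Finset.range n, (U i ⁻¹' Iic x).indicator 1) ω ≤ (1 - η) * (n * x)} := by
          refine measure_mono fun ω hω => ?_
          simp only [mem_ofPred_eq, hmean, ← countLE_eq_sum_indicator, Nat.cast_le] at hω ⊢
          exact hω.le
      _ ≤ ENNReal.ofReal (exp (-(2 / 9) * η ^ 2 * (n * x))) :=
          measure_sum_indicator_le_mul_le (fun i => hmeas i measurableSet_Iic)
            (hindep.indicator_preimage measurableSet_Iic)
            (fun i => measureReal_preimage_Iic_of_map_eq (hmeas i) (hunif i) ⟨hx0, hx1⟩) n hη0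
            (by linarith)
      _ ≤ ENNReal.ofReal (exp (-(η ^ 2 / 9) * k)) := by
          refine ENNReal.ofReal_le_ofReal (exp_le_exp.2 ?_)
          rw [← hmean]
          nlinarith [mul_nonneg (mul_nonneg (sq_nonneg η) (mul_nonneg n.cast_nonneg hx0)) hη0]
  · -- almost surely every `U i ≤ 1 < x`, so all `n ≥ k` sample points are counted
    have hle : ∀ᵐ ω ∂μ, ∀ i, U i ω ≤ 1 :=
      ae_all_iff.2 fun i => ae_le_one_of_map_eq (hmeas i) (hunif i)
    have hnull : μ {ω | countLE U n x ω < k} = 0 := by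
      refine measure_eq_zero_iff_ae_notMem.2 (hle.mono fun ω h hω => ?_)
      rw [mem_ofPred_eq, countLE_eq_of_forall_le fun i => (h i).trans hx1.le] at hω
      exact hkn.not_gt hω
    simp [hnull]

theorem measure_orderStat_notMem_Icc_le (hmeas : ∀ i, Measurable (U i)) (hindep : iIndepFun U μ)
    (hunif : ∀ i, μ.map (U i) = volume.restrict (Icc 0 1)) {η : ℝ} (hη0 : 0 ≤ η) (hη1 : η < 1)
    {n k : ℕ} (hkn : k ≤ n) :
    μ {ω | orderStat U n k ω ∉ Icc ((k : ℝ) / ((1 + η) * n)) (k / ((1 - η) * n))} ≤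
      ENNReal.ofReal (2 * exp (-(η ^ 2 / 9) * k)) := by
  calc _ ≤ μ ({ω | k ≤ countLE U n (k / ((1 + η) * n)) ω} ∪
        {ω | countLE U n (k / ((1 - η) * n)) ω < k}) := by
        refine measure_mono fun ω hω => ?_
        by_contra h
        simp only [mem_union, mem_ofPred_eq, not_or, not_le, not_lt] at h
        exact hω (orderStat_mem_Icc h.1 h.2)
    _ ≤ _ := measure_union_le _ _
    _ ≤ ENNReal.ofReal (exp (-(η ^ 2 / 9) * k)) + ENNReal.ofReal (exp (-(η ^ 2 / 9) * k)) :=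
        add_le_add (measure_le_countLE_le hmeas hindep hunif hη0 hη1.le hkn)
          (measure_countLE_lt_le hmeas hindep hunif hη0 hη1 hkn)
    _ = ENNReal.ofReal (2 * exp (-(η ^ 2 / 9) * k)) := by
        rw [← ENNReal.ofReal_add (exp_pos _).le (exp_pos _).le, two_mul]

theorem measure_biUnion_orderStat_notMem_Icc_le (hmeas : ∀ i, Measurable (U i))
    (hindep : iIndepFun U μ) (hunif : ∀ i, μ.map (U i) = volume.restrict (Icc 0 1)) {η : ℝ}
    (hη0 : 0 ≤ η) (hη1 : η < 1) (ε : ℝ) (n : ℕ) :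
    μ (⋃ k ∈ Finset.Icc ⌊(n : ℝ) ^ ε⌋₊ n,
        {ω | orderStat U n k ω ∉ Icc ((k : ℝ) / ((1 + η) * n)) (k / ((1 - η) * n))}) ≤
      ENNReal.ofReal
        (2 * exp (η ^ 2 / 9) * (((n : ℝ) + 1) * exp (-(η ^ 2 / 9) * (n : ℝ) ^ ε))) := by
  set c := η ^ 2 / 9
  have hc : 0 ≤ c := by positivity
  set b := 2 * exp c * exp (-c * (n : ℝ) ^ ε)
  have hterm : ∀ k ∈ Finset.Icc ⌊(n : ℝ) ^ ε⌋₊ n,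
      μ {ω | orderStat U n k ω ∉ Icc ((k : ℝ) / ((1 + η) * n)) (k / ((1 - η) * n))} ≤
        ENNReal.ofReal b := fun k hk => by
    rw [Finset.mem_Icc] at hk
    refine (measure_orderStat_notMem_Icc_le hmeas hindep hunif hη0 hη1 hk.2).trans
      (ENNReal.ofReal_le_ofReal ?_)
    have hfloor : (n : ℝ) ^ ε < k + 1 :=
      (Nat.lt_floor_add_one _).trans_le (by exact_mod_cast Nat.add_le_add_right hk.1 1)
    show 2 * exp (-c * k) ≤ 2 * exp c * exp (-c * (n : ℝ) ^ ε)
    rw [mul_assoc, ← exp_add]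
    gcongr
    nlinarith
  have hcard : ((Finset.Icc ⌊(n : ℝ) ^ ε⌋₊ n).card : ℝ) ≤ n + 1 := by
    exact_mod_cast (Nat.card_Icc _ _).trans_le (Nat.sub_le _ _)
  calc _ ≤ ∑ k ∈ Finset.Icc ⌊(n : ℝ) ^ ε⌋₊ n,
        μ {ω | orderStat U n k ω ∉ Icc ((k : ℝ) / ((1 + η) * n)) (k / ((1 - η) * n))} :=
        measure_biUnion_finset_le _ _
    _ ≤ ∑ _k ∈ Finset.Icc ⌊(n : ℝ) ^ ε⌋₊ n, ENNReal.ofReal b := Finset.sum_le_sum hterm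
    _ = ENNReal.ofReal ((Finset.Icc ⌊(n : ℝ) ^ ε⌋₊ n).card * b) := by
        rw [Finset.sum_const, nsmul_eq_mul, ← ENNReal.ofReal_natCast,
          ← ENNReal.ofReal_mul (by positivity)]
    _ ≤ _ := by
        refine ENNReal.ofReal_le_ofReal ?_
        have hb : 0 ≤ b := by positivity
        nlinarith

theorem ae_eventually_orderStat_mem_Icc (hmeas : ∀ i, Measurable (U i)) (hindep : iIndepFun U μ)
    (hunif : ∀ i, μ.map (U i) = volume.restrict (Icc 0 1)) {η ε : ℝ} (hη0 : 0 < η) (hη1 : η < 1)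
    (hε : 0 < ε) :
    ∀ᵐ ω ∂μ, ∀ᶠ n : ℕ in atTop, ∀ k ∈ Finset.Icc ⌊(n : ℝ) ^ ε⌋₊ n,
      orderStat U n k ω ∈ Icc ((k : ℝ) / ((1 + η) * n)) (k / ((1 - η) * n)) := by
  have hsum := ne_top_of_le_ne_top
    ((summable_add_one_mul_exp_neg_mul_rpow (by positivity : 0 < η ^ 2 / 9) hε).mul_left
      (2 * exp (η ^ 2 / 9))).tsum_ofReal_ne_top
    (ENNReal.tsum_le_tsum fun n =>
      measure_biUnion_orderStat_notMem_Icc_le hmeas hindep hunif hη0.le hη1 ε n)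
  filter_upwards [ae_eventually_notMem hsum] with ω hω
  filter_upwards [hω] with n hn k hk
  by_contra h
  exact hn (mem_biUnion hk h)

end UniformSample

theorem uniform_order_statistics_consistency_general
    {Ω : Type*} [MeasurableSpace Ω] (PP : Measure Ω)
    (U : ℕ → Ω → ℝ) (hmeas : ∀ i, Measurable (U i))
    (hindep : ProbabilityTheory.iIndepFun U PP)
    (hunif : ∀ i, PP.map (U i) = volume.restrict (Icc (0:ℝ) 1))
    (ε : ℝ) (hε : 0 < ε) :
    ∀ᵐ ω ∂PP, Tendsto (fun n : ℕ =>
        ⨆ θ : Icc ε (1 - ε),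
          |((n : ℝ) / (⌊(n : ℝ) ^ (1 - (θ : ℝ))⌋₊ : ℝ)) *
              orderStat U n ⌊(n : ℝ) ^ (1 - (θ : ℝ))⌋₊ ω - 1|)
      atTop (𝓝 0) := by
  refine ae_tendsto_zero_of_forall_pos_ae_eventually_abs_le fun δ hδ => ?_
  set η := min (δ / 2) (1 / 2)
  have hη0 : 0 < η := lt_min (by positivity) (by norm_num)
  have hη1 : η ≤ 1 / 2 := min_le_right _ _
  filter_upwards [ae_eventually_orderStat_mem_Icc hmeas hindep hunif hη0 (by linarith) hε]
    with ω hω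
  filter_upwards [hω, eventually_ge_atTop 1] with n hband hn
  rw [abs_of_nonneg (Real.iSup_nonneg fun θ => abs_nonneg _)]
  have h2η : 2 * η ≤ δ := by linarith [min_le_left (δ / 2) (1 / 2)]
  refine (Real.iSup_le (fun θ => ?_) (by positivity : (0 : ℝ) ≤ 2 * η)).trans h2η
  obtain ⟨hθε, hθ1⟩ := θ.2
  have hk : 1 ≤ ⌊(n : ℝ) ^ (1 - (θ : ℝ))⌋₊ :=
    Nat.one_le_floor_iff _ |>.2 (one_le_rpow (by exact_mod_cast hn) (by linarith))
  exact abs_div_mul_sub_one_le_of_mem_Icc hη0.le hη1 (by positivity) (by exact_mod_cast hk)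
    (hband _ (floor_rpow_mem_Icc hn (by linarith) (by linarith)))

/-- uniform a.s. convergence of intermediate order statistics of i.i.d.
uniform random variables: `sup_{θ∈[ε,1-ε]} |(n/k_{n,θ}) U_{k_{n,θ}:n} − 1| → 0` a.s. -/
theorem uniform_order_statistics_consistency
    {Ω : Type*} [MeasurableSpace Ω] (PP : Measure Ω) [IsProbabilityMeasure PP]
    (U : ℕ → Ω → ℝ) (hmeas : ∀ i, Measurable (U i))
    (hindep : ProbabilityTheory.iIndepFun U PP)
    (hunif : ∀ i, PP.map (U i) = volume.restrict (Icc (0:ℝ) 1))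
    (ε : ℝ) (hε : 0 < ε) (hε' : ε < 1 / 2) :
    ∀ᵐ ω ∂PP, Tendsto (fun n : ℕ =>
        ⨆ θ : Icc ε (1 - ε),
          |((n : ℝ) / (⌊(n : ℝ) ^ (1 - (θ : ℝ))⌋₊ : ℝ)) *
              orderStat U n ⌊(n : ℝ) ^ (1 - (θ : ℝ))⌋₊ ω - 1|)
      atTop (𝓝 0) :=
  uniform_order_statistics_consistency_general PP U hmeas hindep hunif ε hε

end
end
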